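/- arXiv:2604.24973 — 4 statements merged into one kernel-verified Lean document; each statement's English description precedes it below -/
import Mathlib

section
/- (Single-merge overlap, Proposition 1.) Let n ∈ ℕ and let θ, θ̃ be angle assignments on depth n with prepared amplitudes ψ_b = ∏_{l=1}^n g(θ_{b_1…b_{l−1}}, b_l) and ψ̃_b = ∏_{l=1}^n g(θ̃_{b_1…b_{l−1}}, b_l). Fix a layer k with 0 ≤ k < n, control patterns x, y of length k, and reals θ_x, θ_y, θ_C. Assume: (i) θ̃ agrees with θ on every prefix except on bitstrings of length k lying in B(x) ∪ B(y); (ii) B(x) and B(y) are disjoint; (iii) θ takes the constant value θ_x on B(x) and the constant value θ_y on B(y), and θ̃ takes the constant value θ_C on B(x) ∪ B(y). Then Σ_{b ∈ {0,1}^n} ψ_b ψ̃_b = 1 − Σ_{w ∈ {x,y}} (1 − cos((θ_w − θ_C)/2)) · P_w, where P_w = Σ_{b ∈ B(w)} P_b and P_b = ∏_{l=1}^k f(θ_{b_1…b_{l−1}}, b_l). -/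
/-!
The overlap is a sum over the leaves of the binary tree of depth `n` of products of the edge
weights `g(θ_z, t) g(θ'_z, t)`, and the two edges below a node `z` carry total weight
`cos((θ_z - θ'_z)/2)`. Off layer `k` the two assignments agree, so every node below layer `k`
has total weight `cos² + sin² = 1` and the tree can be cut off after layer `k`, while above
layer `k` the edge weights are `f(θ_z, t) = g(θ_z, t)²`, so a node `c` of layer `k` is reached
with weight `P_c`. Hence the overlap is `Σ_c P_c cos((θ_c - θ'_c)/2)`, where the cosine is `1`
off `B(x) ∪ B(y)`; since `Σ_c P_c = 1` this is the claimed formula.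
-/

/-- `g θ i`: `g(θ,0) = cos(θ/2)`, `g(θ,1) = sin(θ/2)`, with bits as `Bool`. -/
noncomputable def g (θ : ℝ) : Bool → ℝ
  | false => Real.cos (θ / 2)
  | true  => Real.sin (θ / 2)

/-- `f(θ,i) = g(θ,i)²`. -/
noncomputable def f (θ : ℝ) (i : Bool) : ℝ := (g θ i) ^ 2

/-- Prepared amplitude `ψ_b = ∏_{l=1}^n g(θ_{b_1…b_{l−1}}, b_l)` of an angle
assignment `θ` on depth `n`. -/
noncomputable def amp (n : ℕ) (θ : (j : ℕ) → (Fin j → Bool) → ℝ) (b : Fin n → Bool) : ℝ :=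
  ∏ l : Fin n, g (θ l (fun i : Fin l => b (Fin.castLE l.isLt.le i))) (b l)

/-- Prefix probability `P_x = ∏_{l=1}^k f(θ_{x_1…x_{l−1}}, x_l)` for `x ∈ {0,1}^k`. -/
noncomputable def pref (θ : (j : ℕ) → (Fin j → Bool) → ℝ) (k : ℕ) (x : Fin k → Bool) : ℝ :=
  ∏ l : Fin k, f (θ l (fun i : Fin l => x (Fin.castLE l.isLt.le i))) (x l)

/-- `Consistent b x` means the bitstring `b` lies in `B(x)`, the set of bitstrings
consistent with the control pattern `x : Fin k → Option Bool` (`none` = `e`). -/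
def Consistent {k : ℕ} (b : Fin k → Bool) (x : Fin k → Option Bool) : Prop :=
  ∀ t : Fin k, ∀ v : Bool, x t = some v → b t = v

instance {k : ℕ} (b : Fin k → Bool) (x : Fin k → Option Bool) : Decidable (Consistent b x) :=
  inferInstanceAs (Decidable (∀ t : Fin k, ∀ v : Bool, x t = some v → b t = v))

open Finset

noncomputable def pathWeight (A : (j : ℕ) → (Fin j → Bool) → Bool → ℝ) (n : ℕ)
    (b : Fin n → Bool) : ℝ :=
  ∏ l : Fin n, A l (fun i : Fin l => b (Fin.castLE l.isLt.le i)) (b l)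

section pathWeight

variable (A : (j : ℕ) → (Fin j → Bool) → Bool → ℝ)

theorem pathWeight_snoc (n : ℕ) (c : Fin n → Bool) (t : Bool) :
    pathWeight A (n + 1) (Fin.snoc c t) = pathWeight A n c * A n c t := by
  rw [pathWeight, Fin.prod_univ_castSucc, Fin.snoc_last]
  congr 1
  · refine prod_congr rfl fun l _ => ?_
    rw [Fin.snoc_castSucc]
    congr 1
    funext i
    exact Fin.snoc_castSucc (α := fun _ => Bool) t c (Fin.castLE l.isLt.le i)
  · congr 1
    funext i
    exact Fin.snoc_castSucc (α := fun _ => Bool) ..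

theorem sum_pathWeight_succ (n : ℕ) :
    ∑ b : Fin (n + 1) → Bool, pathWeight A (n + 1) b
      = ∑ c : Fin n → Bool, pathWeight A n c * (A n c false + A n c true) := by
  rw [← (Fin.snocEquiv fun _ => Bool).sum_comp, Fintype.sum_prod_type_right]
  refine sum_congr rfl fun c _ => ?_
  rw [Fintype.sum_bool]
  change pathWeight A (n + 1) (Fin.snoc c true) + pathWeight A (n + 1) (Fin.snoc c false) = _
  rw [pathWeight_snoc, pathWeight_snoc]
  ring

theorem sum_pathWeight_eq_of_le {m n : ℕ} (hmn : m ≤ n)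
    (hA : ∀ j (z : Fin j → Bool), m ≤ j → j < n → A j z false + A j z true = 1) :
    ∑ b : Fin n → Bool, pathWeight A n b = ∑ b : Fin m → Bool, pathWeight A m b := by
  induction n, hmn using Nat.le_induction with
  | base => rfl
  | succ n hmn ih =>
    rw [sum_pathWeight_succ, ← ih fun j z hj hjn => hA j z hj (by omega)]
    refine sum_congr rfl fun c _ => ?_
    rw [hA n c hmn n.lt_succ_self, mul_one]

end pathWeight

theorem f_false_add_f_true (θ : ℝ) : f θ false + f θ true = 1 :=
  Real.cos_sq_add_sin_sq (θ / 2)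

theorem g_mul_g_false_add_g_mul_g_true (θ θ' : ℝ) :
    g θ false * g θ' false + g θ true * g θ' true = Real.cos ((θ - θ') / 2) := by
  rw [sub_div, Real.cos_sub]
  rfl

theorem sum_pref_eq_one (θ : (j : ℕ) → (Fin j → Bool) → ℝ) (k : ℕ) :
    ∑ b : Fin k → Bool, pref θ k b = 1 :=
  (sum_pathWeight_eq_of_le (fun j z => f (θ j z)) k.zero_le
    fun j z _ _ => f_false_add_f_true _).trans (by simp [pathWeight])

/-- Single-merge overlap (Proposition 1): if `θ'` is obtained from `θ` by replacing,
in layer `k`, the constant angle `θx` on `B(x)` and `θy` on `B(y)` (with `B(x)`, `B(y)`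
disjoint) by the common angle `θC`, then
`Σ_b ψ_b ψ'_b = 1 − Σ_{w∈{x,y}} (1 − cos((θ_w − θ_C)/2))·P_w`. -/
theorem stmt1 (n k : ℕ) (hk : k < n)
    (θ θ' : (j : ℕ) → (Fin j → Bool) → ℝ)
    (x y : Fin k → Option Bool)
    (θx θy θC : ℝ)
    (hagree : ∀ j, j < n → j ≠ k → ∀ z : Fin j → Bool, θ' j z = θ j z)
    (hagreek : ∀ z : Fin k → Bool, ¬ Consistent z x → ¬ Consistent z y → θ' k z = θ k z)
    (hdisj : ∀ b : Fin k → Bool, ¬ (Consistent b x ∧ Consistent b y))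
    (hθx : ∀ b : Fin k → Bool, Consistent b x → θ k b = θx)
    (hθy : ∀ b : Fin k → Bool, Consistent b y → θ k b = θy)
    (hθC : ∀ b : Fin k → Bool, Consistent b x ∨ Consistent b y → θ' k b = θC) :
    ∑ b : Fin n → Bool, amp n θ b * amp n θ' b
      = 1 - ((1 - Real.cos ((θx - θC) / 2)) *
              (∑ b ∈ Finset.univ.filter (fun b : Fin k → Bool => Consistent b x), pref θ k b)
           + (1 - Real.cos ((θy - θC) / 2)) *
              (∑ b ∈ Finset.univ.filter (fun b : Fin k → Bool => Consistent b y), pref θ k b)) := by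
  set A : (j : ℕ) → (Fin j → Bool) → Bool → ℝ := fun j z t => g (θ j z) t * g (θ' j z) t
  have hnode (j : ℕ) (z : Fin j → Bool) :
      A j z false + A j z true = Real.cos ((θ j z - θ' j z) / 2) :=
    g_mul_g_false_add_g_mul_g_true _ _
  have hcut : ∑ b, pathWeight A n b = ∑ b : Fin (k + 1) → Bool, pathWeight A (k + 1) b :=
    sum_pathWeight_eq_of_le A hk fun j z hj hjn => by
      rw [hnode, hagree j hjn (by omega), sub_self, zero_div, Real.cos_zero]
  have hpref (c : Fin k → Bool) : pathWeight A k c = pref θ k c :=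
    prod_congr rfl fun l _ => by simp only [A, hagree l (l.isLt.trans hk) l.isLt.ne, f, sq]
  have hlayer (c : Fin k → Bool) : pref θ k c * Real.cos ((θ k c - θ' k c) / 2)
      = pref θ k c -
        ((if Consistent c x then (1 - Real.cos ((θx - θC) / 2)) * pref θ k c else 0)
        + (if Consistent c y then (1 - Real.cos ((θy - θC) / 2)) * pref θ k c else 0)) := by
    by_cases hx : Consistent c x
    · rw [if_pos hx, if_neg fun hy => hdisj c ⟨hx, hy⟩, hθx c hx, hθC c (.inl hx)]
      ring
    by_cases hy : Consistent c y
    · rw [if_neg hx, if_pos hy, hθy c hy, hθC c (.inr hy)]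
      ring
    · rw [if_neg hx, if_neg hy, hagreek c hx hy, sub_self, zero_div, Real.cos_zero]
      ring
  calc ∑ b : Fin n → Bool, amp n θ b * amp n θ' b
      = ∑ b : Fin (k + 1) → Bool, pathWeight A (k + 1) b :=
        (sum_congr rfl fun b _ => prod_mul_distrib.symm).trans hcut
    _ = ∑ c : Fin k → Bool, pref θ k c * Real.cos ((θ k c - θ' k c) / 2) := by
        simp only [sum_pathWeight_succ, hpref, hnode]
    _ = _ := by
        rw [sum_congr rfl fun c _ => hlayer c, sum_sub_distrib, sum_add_distrib,
          sum_pref_eq_one, mul_sum, mul_sum, sum_filter, sum_filter]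
end

section
/- (Exactness within one layer, Proposition 2.) Let n ∈ ℕ and let θ, θ̃ be angle assignments on depth n that agree on all bitstrings of every length except possibly on bitstrings of one fixed length k with 0 ≤ k < n. Let ψ and ψ̃ be the respective prepared amplitudes. Then Σ_{b ∈ {0,1}^n} ψ_b ψ̃_b = 1 − Σ_{x ∈ {0,1}^k} (1 − cos((θ_x − θ̃_x)/2)) · P_x, where P_x = ∏_{l=1}^k f(θ_{x_1…x_{l−1}}, x_l). -/
/-
Split each sum over `{0,1}^n` along its first bit: conditioned on the first bit `i`, both
assignments become assignments on the subtree below `i`, of depth `n - 1`. Above layer `k` the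
two angles coincide and contribute the weight `f(θ, i)`, which builds up `P_x`; at layer `k` the
two angles meet and `Σ_i g(a, i) g(b, i) = cos((a - b)/2)`; below layer `k` the assignments agree,
and the remaining sum is `Σ_b ψ_b² = Σ_b P_b = 1`. Hence `Σ_b ψ_b ψ'_b = Σ_x cos((θ_x - θ'_x)/2) P_x`,
which is the claimed formula because `Σ_x P_x = 1`.
-/

def subtree (θ : (j : ℕ) → (Fin j → Bool) → ℝ) (i : Bool) : (j : ℕ) → (Fin j → Bool) → ℝ :=
  fun j z => θ (j + 1) (Fin.cons i z)

lemma sum_fin_succ_pi {α M : Type*} [Fintype α] [AddCommMonoid M] {n : ℕ}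
    (F : (Fin (n + 1) → α) → M) :
    ∑ b, F b = ∑ i, ∑ b : Fin n → α, F (Fin.cons i b) := by
  rw [← (Fin.consEquiv fun _ => α).sum_comp F, Fintype.sum_prod_type]
  rfl

lemma cons_comp_castLE {α : Type*} {n l : ℕ} (i : α) (b : Fin n → α) (hl : l < n) :
    (fun t : Fin (l + 1) => (Fin.cons i b : Fin (n + 1) → α) (Fin.castLE (by omega) t))
      = Fin.cons i (fun t : Fin l => b (Fin.castLE hl.le t)) := by
  funext t
  refine Fin.cases ?_ (fun j => ?_) t
  · rfl
  · exact Fin.cons_succ (α := fun _ => α) i b (Fin.castLE hl.le j)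

lemma sum_g_mul_g (a b : ℝ) : ∑ i, g a i * g b i = Real.cos ((a - b) / 2) := by
  rw [Fintype.sum_bool, sub_div, Real.cos_sub]
  simp only [g]
  ring

lemma sum_f (θ : ℝ) : ∑ i, f θ i = 1 := by
  simpa [f, sq] using sum_g_mul_g θ θ

lemma amp_cons (n : ℕ) (θ : (j : ℕ) → (Fin j → Bool) → ℝ) (i : Bool) (b : Fin n → Bool) :
    amp (n + 1) θ (Fin.cons i b) = g (θ 0 Fin.elim0) i * amp n (subtree θ i) b := by
  rw [amp, Fin.prod_univ_succ, amp]
  congr 1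
  · simp only [Fin.cons_zero]
    congr 2
    exact funext fun t => t.elim0
  · refine Finset.prod_congr rfl fun l _ => ?_
    rw [Fin.cons_succ]
    exact congrArg (g · _) (congrArg (θ _) (cons_comp_castLE i b l.isLt))

lemma pref_cons (k : ℕ) (θ : (j : ℕ) → (Fin j → Bool) → ℝ) (i : Bool) (x : Fin k → Bool) :
    pref θ (k + 1) (Fin.cons i x) = f (θ 0 Fin.elim0) i * pref (subtree θ i) k x := by
  rw [pref, Fin.prod_univ_succ, pref]
  congr 1
  · simp only [Fin.cons_zero]
    congr 2
    exact funext fun t => t.elim0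
  · refine Finset.prod_congr rfl fun l _ => ?_
    rw [Fin.cons_succ]
    exact congrArg (f · _) (congrArg (θ _) (cons_comp_castLE i x l.isLt))

lemma sum_pref (k : ℕ) (θ : (j : ℕ) → (Fin j → Bool) → ℝ) : ∑ x, pref θ k x = 1 := by
  induction k generalizing θ with
  | zero => simp [pref]
  | succ k ih =>
    simp only [sum_fin_succ_pi, pref_cons, ← Finset.mul_sum, ih, mul_one]
    exact sum_f _

lemma amp_sq (n : ℕ) (θ : (j : ℕ) → (Fin j → Bool) → ℝ) (b : Fin n → Bool) :
    amp n θ b ^ 2 = pref θ n b := by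
  rw [amp, pref, ← Finset.prod_pow]
  rfl

lemma amp_congr {n : ℕ} {θ θ' : (j : ℕ) → (Fin j → Bool) → ℝ}
    (h : ∀ j < n, ∀ z, θ' j z = θ j z) (b : Fin n → Bool) : amp n θ' b = amp n θ b := by
  simp only [amp, h _ (Fin.is_lt _)]

lemma sum_amp_mul_amp_of_agree {n : ℕ} {θ θ' : (j : ℕ) → (Fin j → Bool) → ℝ}
    (h : ∀ j < n, ∀ z, θ' j z = θ j z) : ∑ b, amp n θ b * amp n θ' b = 1 := by
  simp only [amp_congr h, ← sq, amp_sq, sum_pref]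

lemma sum_amp_mul_amp_succ (n : ℕ) (θ θ' : (j : ℕ) → (Fin j → Bool) → ℝ) :
    ∑ b, amp (n + 1) θ b * amp (n + 1) θ' b
      = ∑ i, g (θ 0 Fin.elim0) i * g (θ' 0 Fin.elim0) i
          * ∑ b, amp n (subtree θ i) b * amp n (subtree θ' i) b := by
  simp only [sum_fin_succ_pi (fun b => amp (n + 1) θ b * amp (n + 1) θ' b), amp_cons,
    Finset.mul_sum]
  exact Finset.sum_congr rfl fun i _ => Finset.sum_congr rfl fun b _ => by ring

theorem sum_amp_mul_amp_eq_sum_cos_mul_pref (n k : ℕ) (hk : k < n)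
    (θ θ' : (j : ℕ) → (Fin j → Bool) → ℝ)
    (hagree : ∀ j, j < n → j ≠ k → ∀ z : Fin j → Bool, θ' j z = θ j z) :
    ∑ b, amp n θ b * amp n θ' b = ∑ x, Real.cos ((θ k x - θ' k x) / 2) * pref θ k x := by
  induction n generalizing k θ θ' with
  | zero => omega
  | succ n ih =>
    rw [sum_amp_mul_amp_succ]
    cases k with
    | zero =>
      have hsub : ∀ i, ∑ b, amp n (subtree θ i) b * amp n (subtree θ' i) b = 1 := fun i =>
        sum_amp_mul_amp_of_agree fun j hj z => hagree (j + 1) (by omega) (by omega) _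
      rw [Fintype.sum_subsingleton _ Fin.elim0]
      simp only [hsub, mul_one, sum_g_mul_g, pref, Finset.univ_eq_empty, Finset.prod_empty]
    | succ k =>
      have hroot : θ' 0 Fin.elim0 = θ 0 Fin.elim0 := hagree 0 (by omega) (by omega) _
      have hsub : ∀ i, ∑ b, amp n (subtree θ i) b * amp n (subtree θ' i) b
          = ∑ x, Real.cos ((θ (k + 1) (Fin.cons i x) - θ' (k + 1) (Fin.cons i x)) / 2)
              * pref (subtree θ i) k x := fun i =>
        ih k (by omega) _ _ fun j hj hjk z => hagree (j + 1) (by omega) (by omega) _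
      simp only [hroot, hsub, Finset.mul_sum, sum_fin_succ_pi, pref_cons]
      exact Finset.sum_congr rfl fun i _ => Finset.sum_congr rfl fun x _ => by rw [f]; ring

/-- Exactness within one layer (Proposition 2): if two angle assignments `θ, θ'`
on depth `n` agree on all bitstrings of every length `< n` except possibly length `k`,
then `Σ_b ψ_b ψ'_b = 1 − Σ_{x∈{0,1}^k} (1 − cos((θ_x − θ'_x)/2))·P_x`. -/
theorem stmt2 (n k : ℕ) (hk : k < n)
    (θ θ' : (j : ℕ) → (Fin j → Bool) → ℝ)
    (hagree : ∀ j, j < n → j ≠ k → ∀ z : Fin j → Bool, θ' j z = θ j z) :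
    ∑ b : Fin n → Bool, amp n θ b * amp n θ' b
      = 1 - ∑ x : Fin k → Bool,
          (1 - Real.cos ((θ k x - θ' k x) / 2)) * pref θ k x := by
  rw [sum_amp_mul_amp_eq_sum_cos_mul_pref n k hk θ θ' hagree]
  simp only [sub_mul, one_mul, Finset.sum_sub_distrib, sum_pref]
  ring
end

section
/- (Lower bound on the overlap, cluster form of Theorem 1.) Let n ∈ ℕ and let θ, θ̃ be angle assignments on depth n with prepared amplitudes ψ and ψ̃. Let 𝒞 be a finite family of pairwise disjoint sets of bitstrings (of lengths < n) whose union contains every bitstring x with θ̃_x ≠ θ_x, and for each C ∈ 𝒞 let R_C be a real number such that W_x ≤ R_C · P_x for every x ∈ C. Then Σ_{b ∈ {0,1}^n} ψ_b ψ̃_b ≥ 1 − Σ_{C ∈ 𝒞} R_C · L_C, where L_C = Σ_{x ∈ C} P_x · (1 − cos((θ_x − θ̃_x)/2)). -/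
/-- Joint weight `W_x = ∏_{l=1}^k g(θ_{x_1…x_{l−1}}, x_l)·g(θ'_{x_1…x_{l−1}}, x_l)`. -/
noncomputable def W (θ θ' : (j : ℕ) → (Fin j → Bool) → ℝ) (k : ℕ) (x : Fin k → Bool) : ℝ :=
  ∏ l : Fin k,
    (g (θ l (fun i : Fin l => x (Fin.castLE l.isLt.le i))) (x l) *
      g (θ' l (fun i : Fin l => x (Fin.castLE l.isLt.le i))) (x l))

/-! Since `ψ_b ψ̃_b = W_b`, the overlap is `Σ_b W_b`. Summing out the last bit with the cosine
difference formula gives `Σ_{|x|=k+1} W_x = Σ_{|x|=k} W_x cos((θ_x − θ̃_x)/2)`, which telescopes to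
`Σ_b W_b = 1 − Σ_{|x|<n} W_x (1 − cos((θ_x − θ̃_x)/2))`. Only prefixes with `θ̃_x ≠ θ_x` contribute;
grouping them into the disjoint clusters and using `W_x ≤ R_C P_x` with `1 − cos ≥ 0` gives the bound. -/

theorem Fin.prod_univ_prefix_snoc {α M : Type*} [CommMonoid M]
    (F : (j : ℕ) → (Fin j → α) → α → M) (n : ℕ) (x : Fin n → α) (a : α) :
    ∏ l : Fin (n + 1),
        F l (fun i : Fin l => (Fin.snoc x a : Fin (n + 1) → α) (Fin.castLE l.isLt.le i))
          ((Fin.snoc x a : Fin (n + 1) → α) l)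
      = (∏ l : Fin n, F l (fun i : Fin l => x (Fin.castLE l.isLt.le i)) (x l)) * F n x a := by
  rw [Fin.prod_univ_castSucc]
  simp only [Fin.snoc_castSucc, Fin.snoc_last]
  have hprefix : ∀ (k : ℕ) (hk : k ≤ n), (fun i : Fin k => (Fin.snoc x a : Fin (n + 1) → α)
      (Fin.castLE (hk.trans n.le_succ) i)) = fun i => x (Fin.castLE hk i) := fun k hk =>
    funext fun i => Fin.snoc_castSucc (α := fun _ => α) (i := Fin.castLE hk i) ..
  congr 1
  · exact Finset.prod_congr rfl fun l _ => congrArg (F l · (x l)) (hprefix l l.isLt.le)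
  · exact congrArg (F n · a) (hprefix n le_rfl)

lemma W_snoc (θ θ' : (j : ℕ) → (Fin j → Bool) → ℝ) (n : ℕ) (x : Fin n → Bool) (i : Bool) :
    W θ θ' (n + 1) (Fin.snoc x i) = W θ θ' n x * (g (θ n x) i * g (θ' n x) i) :=
  Fin.prod_univ_prefix_snoc (fun l y b => g (θ l y) b * g (θ' l y) b) n x i

lemma sum_bool_g_mul_g (a b : ℝ) : ∑ i : Bool, g a i * g b i = Real.cos ((a - b) / 2) := by
  rw [Fintype.sum_bool]
  simp only [g]
  rw [sub_div, Real.cos_sub]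
  ring

lemma sum_W_succ (θ θ' : (j : ℕ) → (Fin j → Bool) → ℝ) (n : ℕ) :
    ∑ b : Fin (n + 1) → Bool, W θ θ' (n + 1) b
      = ∑ x : Fin n → Bool, W θ θ' n x * Real.cos ((θ n x - θ' n x) / 2) := by
  rw [← Fintype.sum_equiv (Fin.snocEquiv fun _ => Bool)
    (fun p => W θ θ' (n + 1) (Fin.snoc p.2 p.1)) _ fun _ => rfl, Fintype.sum_prod_type_right]
  simp only [W_snoc, ← Finset.mul_sum, sum_bool_g_mul_g]

lemma sum_W_eq_one_sub (θ θ' : (j : ℕ) → (Fin j → Bool) → ℝ) (n : ℕ) :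
    ∑ b : Fin n → Bool, W θ θ' n b
      = 1 - ∑ k : Fin n, ∑ x : Fin k → Bool,
          W θ θ' k x * (1 - Real.cos ((θ k x - θ' k x) / 2)) := by
  induction n with
  | zero => simp [W]
  | succ n ih =>
    rw [sum_W_succ, Fin.sum_univ_castSucc, ← sub_sub]
    simp only [Fin.val_castSucc, Fin.val_last]
    rw [← ih, ← Finset.sum_sub_distrib]
    simp only [mul_sub, mul_one, sub_sub_cancel]

lemma sum_amp_mul_amp (n : ℕ) (θ θ' : (j : ℕ) → (Fin j → Bool) → ℝ) :
    ∑ b : Fin n → Bool, amp n θ b * amp n θ' b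
      = 1 - ∑ p : (k : Fin n) × (Fin k → Bool),
          W θ θ' p.1 p.2 * (1 - Real.cos ((θ p.1 p.2 - θ' p.1 p.2) / 2)) := by
  rw [Fintype.sum_sigma]
  simp only [amp, ← Finset.prod_mul_distrib]
  exact sum_W_eq_one_sub θ θ' n

theorem Finset.sum_le_sum_sum_of_pairwiseDisjoint_of_cover {α M : Type*} [Fintype α]
    [AddCommMonoid M] [PartialOrder M] [IsOrderedAddMonoid M]
    (𝒞 : Finset (Finset α)) (hdisj : (𝒞 : Set (Finset α)).PairwiseDisjoint id)
    (u : α → M) (v : Finset α → α → M) (hcover : ∀ a, u a ≠ 0 → ∃ C ∈ 𝒞, a ∈ C)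
    (hle : ∀ C ∈ 𝒞, ∀ a ∈ C, u a ≤ v C a) :
    ∑ a, u a ≤ ∑ C ∈ 𝒞, ∑ a ∈ C, v C a := by
  classical
  have hsupport : ∀ a ∉ 𝒞.biUnion id, u a = 0 := fun a ha => by
    by_contra hne
    obtain ⟨C, hC, haC⟩ := hcover a hne
    exact ha (Finset.mem_biUnion.2 ⟨C, hC, haC⟩)
  calc ∑ a, u a = ∑ a ∈ 𝒞.biUnion id, u a :=
        (Finset.sum_subset (Finset.subset_univ _) fun a _ ha => hsupport a ha).symm
    _ = ∑ C ∈ 𝒞, ∑ a ∈ C, u a := Finset.sum_biUnion hdisj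
    _ ≤ ∑ C ∈ 𝒞, ∑ a ∈ C, v C a := Finset.sum_le_sum fun C hC => Finset.sum_le_sum (hle C hC)

/-- Lower bound on the overlap (cluster form of Theorem 1): if `𝒞` is a finite family
of pairwise disjoint sets of bitstrings of lengths `< n` whose union contains every
bitstring where `θ' ≠ θ`, and `R_C` satisfies `W_x ≤ R_C·P_x` for all `x ∈ C`, then
`Σ_b ψ_b ψ'_b ≥ 1 − Σ_{C∈𝒞} R_C·L_C` with `L_C = Σ_{x∈C} P_x(1 − cos((θ_x − θ'_x)/2))`. -/
theorem stmt5 (n : ℕ) (θ θ' : (j : ℕ) → (Fin j → Bool) → ℝ)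
    (𝒞 : Finset (Finset ((k : Fin n) × (Fin (k : ℕ) → Bool))))
    (hdisj : ∀ C ∈ 𝒞, ∀ C' ∈ 𝒞, C ≠ C' → Disjoint C C')
    (hcover : ∀ p : (k : Fin n) × (Fin (k : ℕ) → Bool),
      θ' p.1 p.2 ≠ θ p.1 p.2 → ∃ C ∈ 𝒞, p ∈ C)
    (R : Finset ((k : Fin n) × (Fin (k : ℕ) → Bool)) → ℝ)
    (hR : ∀ C ∈ 𝒞, ∀ p ∈ C, W θ θ' p.1 p.2 ≤ R C * pref θ p.1 p.2) :
    ∑ b : Fin n → Bool, amp n θ b * amp n θ' b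
      ≥ 1 - ∑ C ∈ 𝒞, R C *
          ∑ p ∈ C, pref θ p.1 p.2 * (1 - Real.cos ((θ p.1 p.2 - θ' p.1 p.2) / 2)) := by
  rw [sum_amp_mul_amp]
  simp only [Finset.mul_sum, ← mul_assoc]
  refine sub_le_sub_left (Finset.sum_le_sum_sum_of_pairwiseDisjoint_of_cover 𝒞 hdisj _ _
    (fun p hp => hcover p fun h => hp ?_) fun C hC p hp => ?_) 1
  · rw [h, sub_self, zero_div, Real.cos_zero, sub_self, mul_zero]
  · exact mul_le_mul_of_nonneg_right (hR C hC p hp) (sub_nonneg.2 (Real.cos_le_one _))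
end

section
/- (Correctness of the Grover–Rudolph angle construction for nonnegative real states.) Let n ∈ ℕ and let ψ : {0,1}^n → ℝ satisfy ψ_b ≥ 0 for all b. For 0 ≤ k ≤ n and x ∈ {0,1}^k define the coarse-grained amplitude ψ^{(k)}_x = √(Σ_{s ∈ {0,1}^{n−k}} ψ_{xs}²), where xs denotes concatenation, and define the angle θ_x = 2·arccos(ψ^{(k+1)}_{x0} / ψ^{(k)}_x) if ψ^{(k)}_x ≠ 0, and θ_x = 0 otherwise. Then for every b ∈ {0,1}^n, ∏_{l=1}^n g(θ_{b_1…b_{l−1}}, b_l) = ψ_b / ψ^{(0)}, provided ψ is not identically zero; in particular, if Σ_{b} ψ_b² = 1 then ∏_{l=1}^n g(θ_{b_1…b_{l−1}}, b_l) = ψ_b for every b. -/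
/-- Concatenation `xs ∈ {0,1}^n` of `x ∈ {0,1}^k` and `s ∈ {0,1}^{n−k}` for `k ≤ n`. -/
def appendBits {n k : ℕ} (hk : k ≤ n) (x : Fin k → Bool) (s : Fin (n - k) → Bool)
    (i : Fin n) : Bool :=
  Fin.append x s (Fin.cast (by omega) i)

/-- Coarse-grained amplitude `ψ^{(k)}_x = √(Σ_{s∈{0,1}^{n−k}} ψ_{xs}²)`. -/
noncomputable def coarse (n : ℕ) (ψ : (Fin n → Bool) → ℝ) (k : ℕ) (hk : k ≤ n)
    (x : Fin k → Bool) : ℝ :=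
  Real.sqrt (∑ s : Fin (n - k) → Bool, (ψ (appendBits hk x s)) ^ 2)

/-- Grover–Rudolph angle at the prefix `x ∈ {0,1}^k` (for `k < n`):
`θ_x = 2·arccos(ψ^{(k+1)}_{x0} / ψ^{(k)}_x)` if `ψ^{(k)}_x ≠ 0`, and `0` otherwise.
(The value for `k ≥ n` is an irrelevant junk value `0`.) -/
noncomputable def grAngle (n : ℕ) (ψ : (Fin n → Bool) → ℝ) (k : ℕ)
    (x : Fin k → Bool) : ℝ :=
  if h : k < n then
    (if coarse n ψ k h.le x = 0 then 0
      else 2 * Real.arccos (coarse n ψ (k + 1) h (Fin.snoc x false) / coarse n ψ k h.le x))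
  else 0

lemma appendBits_apply {n k : ℕ} (hk : k ≤ n) (x : Fin k → Bool) (s : Fin (n - k) → Bool)
    (i : Fin n) : appendBits hk x s i =
      if h : (i : ℕ) < k then x ⟨i, h⟩ else s ⟨(i : ℕ) - k, by omega⟩ := by
  simp [appendBits, Fin.append, Fin.addCases, Fin.cast]

lemma appendBits_snoc {n k : ℕ} (h : k < n) (x : Fin k → Bool) (c : Bool)
    (t : Fin (n - (k + 1)) → Bool) :
    appendBits h (Fin.snoc x c) t =
      appendBits h.le x (fun j => (Fin.cons c t : Fin (n - (k + 1) + 1) → Bool)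
        (Fin.cast (by omega : n - k = n - (k + 1) + 1) j)) := by
  funext i
  simp only [appendBits_apply, Fin.snoc, Fin.castLT]
  split_ifs
  · rfl
  · rw [show Fin.cast _ ⟨(i : ℕ) - k, _⟩ = (0 : Fin (n - (k + 1) + 1)) from
      Fin.ext (by simp only [Fin.val_cast, Fin.val_zero]; omega), Fin.cons_zero]
    rfl
  · omega
  · rw [show Fin.cast _ ⟨(i : ℕ) - k, _⟩ = Fin.succ ⟨(i : ℕ) - (k + 1), by omega⟩ from
      Fin.ext (by simp only [Fin.val_cast, Fin.val_succ]; omega), Fin.cons_succ]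

lemma sum_appendBits_eq_sum_bool {M : Type*} [AddCommMonoid M] {n k : ℕ} (h : k < n)
    (x : Fin k → Bool) (F : (Fin n → Bool) → M) :
    ∑ s, F (appendBits h.le x s) = ∑ c : Bool, ∑ t, F (appendBits h (Fin.snoc x c) t) := by
  let e := (Fin.consEquiv fun _ => Bool).trans
    (Equiv.arrowCongr (finCongr (by omega : n - (k + 1) + 1 = n - k)) (Equiv.refl Bool))
  rw [← e.sum_comp, Fintype.sum_prod_type]
  simp only [appendBits_snoc]
  rfl

lemma amp_succ {k : ℕ} (θ : (j : ℕ) → (Fin j → Bool) → ℝ) (x : Fin (k + 1) → Bool) :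
    amp (k + 1) θ x = amp k θ (Fin.init x) * g (θ k (Fin.init x)) (x (Fin.last k)) := by
  rw [amp, Fin.prod_univ_castSucc]
  rfl

lemma amp_zero (θ : (j : ℕ) → (Fin j → Bool) → ℝ) (x : Fin 0 → Bool) : amp 0 θ x = 1 :=
  Fin.prod_univ_zero _

lemma g_two_mul_arccos_div_mul {a : Bool → ℝ} {c : ℝ} (ha : ∀ i, 0 ≤ a i) (hc : 0 < c)
    (hpyth : c ^ 2 = a false ^ 2 + a true ^ 2) (i : Bool) :
    g (2 * Real.arccos (a false / c)) i * c = a i := by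
  have hr₀ : 0 ≤ a false / c := div_nonneg (ha false) hc.le
  have hr₁ : a false / c ≤ 1 := (div_le_one hc).2 (by nlinarith [ha false, ha true])
  cases i
  · change Real.cos _ * c = _
    rw [mul_div_cancel_left₀ _ two_ne_zero, Real.cos_arccos (by linarith) hr₁,
      div_mul_cancel₀ _ hc.ne']
  · change Real.sin _ * c = _
    have hsin : 1 - (a false / c) ^ 2 = (a true / c) ^ 2 := by
      field_simp
      linarith
    rw [mul_div_cancel_left₀ _ two_ne_zero, Real.sin_arccos, hsin,
      Real.sqrt_sq (div_nonneg (ha true) hc.le), div_mul_cancel₀ _ hc.ne']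

section coarse

variable {n : ℕ} (ψ : (Fin n → Bool) → ℝ)

lemma coarse_nonneg {k : ℕ} (hk : k ≤ n) (x : Fin k → Bool) : 0 ≤ coarse n ψ k hk x :=
  Real.sqrt_nonneg _

lemma coarse_sq {k : ℕ} (hk : k ≤ n) (x : Fin k → Bool) :
    coarse n ψ k hk x ^ 2 = ∑ s, ψ (appendBits hk x s) ^ 2 :=
  Real.sq_sqrt (by positivity)

lemma coarse_sq_eq_add {k : ℕ} (h : k < n) (x : Fin k → Bool) :
    coarse n ψ k h.le x ^ 2 =
      coarse n ψ (k + 1) h (Fin.snoc x false) ^ 2 +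
        coarse n ψ (k + 1) h (Fin.snoc x true) ^ 2 := by
  rw [coarse_sq, coarse_sq, coarse_sq, sum_appendBits_eq_sum_bool h x (ψ · ^ 2),
    Fintype.sum_bool, add_comm]

lemma coarse_zero_eq_sqrt : coarse n ψ 0 (Nat.zero_le n) (fun i => i.elim0) =
    √(∑ b, ψ b ^ 2) := by
  unfold coarse
  congr 1
  refine Fintype.sum_congr _ _ fun s => ?_
  congr 2
  funext i
  simp [appendBits_apply]

lemma coarse_self (hψ : ∀ b, 0 ≤ ψ b) (b : Fin n → Bool) : coarse n ψ n le_rfl b = ψ b := by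
  have hb : ∀ s, appendBits le_rfl b s = b := fun s => funext fun i => by
    simp [appendBits_apply]
  simp [coarse, hb, Real.sqrt_sq (hψ b)]

lemma coarse_snoc_eq_zero {k : ℕ} (h : k < n) {x : Fin k → Bool}
    (hx : coarse n ψ k h.le x = 0) (c : Bool) : coarse n ψ (k + 1) h (Fin.snoc x c) = 0 := by
  have hsq := coarse_sq_eq_add ψ h x
  rw [hx] at hsq
  have h₀ := coarse_nonneg ψ h (Fin.snoc x false)
  have h₁ := coarse_nonneg ψ h (Fin.snoc x true)
  cases c <;> nlinarith

lemma g_grAngle_mul_coarse {k : ℕ} (h : k < n) (x : Fin k → Bool) (c : Bool) :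
    g (grAngle n ψ k x) c * coarse n ψ k h.le x = coarse n ψ (k + 1) h (Fin.snoc x c) := by
  by_cases hx : coarse n ψ k h.le x = 0
  · rw [hx, coarse_snoc_eq_zero ψ h hx, mul_zero]
  rw [grAngle, dif_pos h, if_neg hx]
  exact g_two_mul_arccos_div_mul (fun c => coarse_nonneg ψ h (Fin.snoc x c))
    ((coarse_nonneg ψ h.le x).lt_of_ne' hx) (coarse_sq_eq_add ψ h x) c

lemma amp_grAngle_mul_coarse_zero {k : ℕ} (hk : k ≤ n) (x : Fin k → Bool) :
    amp k (grAngle n ψ) x * coarse n ψ 0 (Nat.zero_le n) (fun i => i.elim0) =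
      coarse n ψ k hk x := by
  induction k with
  | zero => rw [amp_zero, one_mul, Subsingleton.elim x]
  | succ k ih =>
    rw [amp_succ, mul_right_comm, ih (Nat.le_of_succ_le hk), mul_comm,
      g_grAngle_mul_coarse ψ hk, Fin.snoc_init_self]

end coarse

/-- Correctness of the Grover–Rudolph angle construction for nonnegative real states:
if `ψ ≥ 0` is not identically zero, then for every `b ∈ {0,1}^n` the prepared amplitude
of the Grover–Rudolph angles equals `ψ_b / ψ^{(0)}`; in particular, if `Σ_b ψ_b² = 1`
then it equals `ψ_b`. -/
theorem stmt13 (n : ℕ) (ψ : (Fin n → Bool) → ℝ)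
    (hψ : ∀ b, 0 ≤ ψ b) (hne : ψ ≠ 0) :
    (∀ b : Fin n → Bool,
        amp n (grAngle n ψ) b
          = ψ b / coarse n ψ 0 (Nat.zero_le n) (fun i => i.elim0)) ∧
    ((∑ b : Fin n → Bool, (ψ b) ^ 2) = 1 →
      ∀ b : Fin n → Bool, amp n (grAngle n ψ) b = ψ b) := by
  have hnorm_pos : 0 < coarse n ψ 0 (Nat.zero_le n) (fun i => i.elim0) := by
    obtain ⟨b₀, hb₀⟩ := Function.ne_iff.1 hne
    rw [coarse_zero_eq_sqrt, Real.sqrt_pos]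
    exact Finset.sum_pos' (fun b _ => sq_nonneg (ψ b))
      ⟨b₀, Finset.mem_univ b₀, sq_pos_of_ne_zero hb₀⟩
  have hamp (b : Fin n → Bool) :
      amp n (grAngle n ψ) b = ψ b / coarse n ψ 0 (Nat.zero_le n) (fun i => i.elim0) := by
    rw [eq_div_iff hnorm_pos.ne', amp_grAngle_mul_coarse_zero ψ le_rfl, coarse_self ψ hψ]
  refine ⟨hamp, fun hnorm b => ?_⟩
  rw [hamp, coarse_zero_eq_sqrt, hnorm, Real.sqrt_one, div_one]
end
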